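/- In the Iwahori-Hecke algebra of a Coxeter system (W,S) with parameter q, multiplication satisfies T_s T_w = T_{sw} if ℓ(sw) > ℓ(w), and T_s T_w = (q−1)T_w + q T_{sw} if ℓ(sw) < ℓ(w), for s ∈ S and w ∈ W. -/

import Mathlib

namespace HeckeAux

open CoxeterSystem List

open scoped Classical

variable {B : Type} {M : CoxeterMatrix B} {W : Type} [Group W] (cs : CoxeterSystem M W)

local prefix:100 "s" => cs.simple
local prefix:100 "π" => cs.wordProd
local prefix:100 "ℓ" => cs.length

theorem conj_conj (i : B) (t : W) : s i * (s i * t * s i) * s i = t := by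
  simp [mul_assoc, cs.simple_mul_simple_cancel_left, cs.simple_mul_simple_self]

theorem conj_eq_simple_iff (i : B) (t : W) : s i * t * s i = s i ↔ t = s i := by
  constructor
  · intro h
    have := congrArg (fun x => s i * x * s i) h
    rwa [conj_conj cs _ _, cs.simple_mul_simple_self, one_mul] at this
  · rintro rfl
    simp [mul_assoc, cs.simple_mul_simple_self]

open scoped Classical in
/-- The Tits sign permutation associated to a simple generator. -/
noncomputable def eta (i : B) : Equiv.Perm (W × ℤˣ) where
  toFun x := (s i * x.1 * s i, if x.1 = s i then -x.2 else x.2)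
  invFun x := (s i * x.1 * s i, if x.1 = s i then -x.2 else x.2)
  left_inv := by
    rintro ⟨t, ε⟩
    simp only [conj_eq_simple_iff cs i t]
    rw [conj_conj cs _ _]
    by_cases h : t = s i <;> simp [h]
  right_inv := by
    rintro ⟨t, ε⟩
    simp only [conj_eq_simple_iff cs i t]
    rw [conj_conj cs _ _]
    by_cases h : t = s i <;> simp [h]

open scoped Classical in
theorem eta_apply (i : B) (t : W) (ε : ℤˣ) :
    eta cs i (t, ε) = (s i * t * s i, if t = s i then -ε else ε) := rfl

/-- Applying a product of `eta`s: conjugation in the first component, and the sign counts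
occurrences in the right inversion sequence. -/
theorem prod_eta_apply (ω : List B) (t : W) (ε : ℤˣ) :
    (ω.map (eta cs)).prod (t, ε)
      = (π ω * t * (π ω)⁻¹, (-1) ^ ((cs.rightInvSeq ω).count t) * ε) := by
  induction ω generalizing ε with
  | nil => simp [cs.wordProd_nil]
  | cons i ω ih =>
      rw [List.map_cons, List.prod_cons, Equiv.Perm.mul_apply, ih, eta_apply]
      have hc : cs.rightInvSeq (i :: ω) = ((π ω)⁻¹ * s i * π ω) :: cs.rightInvSeq ω := rfl
      have hcond : π ω * t * (π ω)⁻¹ = s i ↔ t = (π ω)⁻¹ * s i * π ω := by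
        constructor
        · intro h
          rw [← h]; group
        · rintro rfl; group
      rw [hc, List.count_cons]
      simp only [beq_iff_eq]
      have hπ : s i * (π ω * t * (π ω)⁻¹) * s i = π (i :: ω) * t * (π (i :: ω))⁻¹ := by
        rw [cs.wordProd_cons, mul_inv_rev, cs.inv_simple]
        group
      by_cases h : t = (π ω)⁻¹ * s i * π ω
      · rw [if_pos (hcond.2 h), if_pos h.symm, hπ, pow_succ]
        refine Prod.ext rfl ?_
        show -((-1) ^ count t (cs.rightInvSeq ω) * ε) = (-1) ^ count t (cs.rightInvSeq ω) * -1 * ε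
        rw [mul_neg_one, neg_mul]
      · rw [if_neg (fun hh => h (hcond.1 hh)), if_neg (fun hh => h hh.symm), hπ, add_zero]

/-- The doubled alternating word `[i, j, i, j, ...]` of length `2 * m`. -/
def dword (i j : B) : ℕ → List B
  | 0 => []
  | m + 1 => i :: j :: dword i j m

theorem prod_dword (i j : B) (m : ℕ) : π (dword i j m) = (s i * s j) ^ m := by
  induction m with
  | zero => simp [dword, cs.wordProd_nil]
  | succ m ih =>
      rw [dword, cs.wordProd_cons, cs.wordProd_cons, ih, pow_succ', mul_assoc]

theorem prod_map_eta_dword (i j : B) (m : ℕ) :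
    ((dword i j m).map (eta cs)).prod = (eta cs i * eta cs j) ^ m := by
  induction m with
  | zero => simp [dword]
  | succ m ih =>
      rw [dword, List.map_cons, List.map_cons, List.prod_cons, List.prod_cons, ih, pow_succ',
        mul_assoc]

theorem swap_pow (i j : B) (m : ℕ) :
    s j * (s i * s j) ^ m = ((s j * s i) ^ m : W) * s j := by
  induction m with
  | zero => simp
  | succ m ih =>
      rw [pow_succ, ← mul_assoc, ih, pow_succ]
      group

theorem inv_pow_simple (i j : B) (m : ℕ) :
    (((s i * s j) ^ m : W))⁻¹ = ((s j * s i) ^ m : W) := by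
  rw [← inv_pow, mul_inv_rev, cs.inv_simple, cs.inv_simple]

theorem count_ris_dword (i j : B) (m : ℕ) (t : W) :
    List.count t (cs.rightInvSeq (dword i j m))
      = ∑ n ∈ Finset.range (2 * m), (if ((s j * s i) ^ n : W) * s j = t then 1 else 0) := by
  induction m with
  | zero => simp [dword]
  | succ m ih =>
      have hris : cs.rightInvSeq (dword i j (m + 1))
          = ((π (j :: dword i j m))⁻¹ * s i * π (j :: dword i j m))
            :: ((π (dword i j m))⁻¹ * s j * π (dword i j m))
            :: cs.rightInvSeq (dword i j m) := rfl
      have hc2 : (π (dword i j m))⁻¹ * s j * π (dword i j m)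
          = ((s j * s i) ^ (2 * m) : W) * s j := by
        rw [prod_dword, inv_pow_simple, mul_assoc, swap_pow, ← mul_assoc, ← pow_add, two_mul]
      have hc1 : (π (j :: dword i j m))⁻¹ * s i * π (j :: dword i j m)
          = ((s j * s i) ^ (2 * m + 1) : W) * s j := by
        rw [cs.wordProd_cons, prod_dword, mul_inv_rev, cs.inv_simple, inv_pow_simple]
        calc (s j * s i) ^ m * s j * s i * (s j * (s i * s j) ^ m)
            = (s j * s i) ^ m * (s j * s i) * (s j * (s i * s j) ^ m) := by group
          _ = (s j * s i) ^ m * (s j * s i) * ((s j * s i) ^ m * s j) := by rw [swap_pow]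
          _ = ((s j * s i) ^ (2 * m + 1) : W) * s j := by
              rw [← pow_succ, ← mul_assoc, ← pow_add]
              congr 2
              omega
      rw [hris, List.count_cons, List.count_cons, ih]
      simp only [beq_iff_eq, hc1, hc2]
      have h2m : 2 * (m + 1) = (2 * m + 1) + 1 := by omega
      rw [h2m, Finset.sum_range_succ, Finset.sum_range_succ]

theorem eta_liftable : M.IsLiftable (eta cs) := by
  intro i j
  have h : (eta cs i * eta cs j) ^ M i j = ((dword i j (M i j)).map (eta cs)).prod :=
    (prod_map_eta_dword cs i j (M i j)).symm
  rw [h]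
  apply Equiv.ext
  rintro ⟨t, ε⟩
  rw [prod_eta_apply, prod_dword, cs.simple_mul_simple_pow]
  have heven : Even (List.count t (cs.rightInvSeq (dword i j (M i j)))) := by
    rw [count_ris_dword]
    have : (2 : ℕ) * M i j = M i j + M i j := two_mul _
    rw [this, Finset.sum_range_add]
    have hshift : ∀ n, (if ((s j * s i) ^ (M i j + n) : W) * s j = t then 1 else 0)
        = (if ((s j * s i) ^ n : W) * s j = t then 1 else 0) := by
      intro n
      rw [pow_add, cs.simple_mul_simple_pow', one_mul]
    simp only [hshift]
    exact ⟨_, rfl⟩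
  rw [heven.neg_one_pow, one_mul]
  simp
/-- The Tits sign representation of the Coxeter group. -/
noncomputable def mu : W →* Equiv.Perm (W × ℤˣ) := cs.lift ⟨eta cs, eta_liftable cs⟩

theorem mu_wordProd (ω : List B) : mu cs (π ω) = (ω.map (eta cs)).prod := by
  induction ω with
  | nil => rw [cs.wordProd_nil, map_one, List.map_nil, List.prod_nil]
  | cons i ω ih =>
      rw [cs.wordProd_cons, map_mul, ih, List.map_cons, List.prod_cons]
      congr 1
      exact cs.lift_apply_simple (eta_liftable cs) i

/-- The sign of `t` in `w`. -/
noncomputable def sgn (w t : W) : ℤˣ := (mu cs w (t, 1)).2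

theorem mu_apply (w t : W) (ε : ℤˣ) : mu cs w (t, ε) = (w * t * w⁻¹, sgn cs w t * ε) := by
  obtain ⟨ω, hω⟩ := cs.wordProd_surjective w
  subst hω
  rw [sgn, mu_wordProd, prod_eta_apply, prod_eta_apply, mul_one]

theorem sgn_eq_count (ω : List B) (t : W) :
    sgn cs (π ω) t = (-1) ^ (List.count t (cs.rightInvSeq ω)) := by
  rw [sgn, mu_wordProd, prod_eta_apply, mul_one]

theorem mem_ris_of_sgn_neg {ω : List B} {t : W} (h : sgn cs (π ω) t = -1) :
    t ∈ cs.rightInvSeq ω := by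
  rw [sgn_eq_count] at h
  by_contra hmem
  rw [← List.count_eq_zero] at hmem
  rw [hmem, pow_zero] at h
  exact (by decide : (1 : ℤˣ) ≠ -1) h

theorem mu_refl_self {t : W} (ht : cs.IsReflection t) (ε : ℤˣ) :
    mu cs t (t, ε) = (t, -ε) := by
  obtain ⟨u, k, rfl⟩ := ht
  set t := u * s k * u⁻¹ with hT
  have h1 : mu cs u⁻¹ (t, ε) = (s k, sgn cs u⁻¹ t * ε) := by
    rw [mu_apply]
    congr 1
    rw [hT]; group
  have hsk : mu cs (s k) = eta cs k := cs.lift_apply_simple (eta_liftable cs) k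
  have h2 : mu cs (s k) (s k, sgn cs u⁻¹ t * ε) = (s k, -(sgn cs u⁻¹ t * ε)) := by
    rw [hsk, eta_apply, if_pos rfl, cs.simple_mul_simple_self, one_mul]
  have h3 : mu cs u (s k, -(sgn cs u⁻¹ t * ε)) = (t, sgn cs u (s k) * -(sgn cs u⁻¹ t * ε)) := by
    rw [mu_apply]
  have hcancel : sgn cs u⁻¹ t * sgn cs u (s k) = 1 := by
    have := congrFun (congrArg (fun (f : Equiv.Perm (W × ℤˣ)) => (f : W × ℤˣ → W × ℤˣ))
      (by rw [← map_mul, inv_mul_cancel, map_one] : mu cs u⁻¹ * mu cs u = 1)) (s k, 1)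
    simp only [Equiv.Perm.coe_mul, Function.comp_apply, Equiv.Perm.coe_one, id_eq] at this
    rw [mu_apply, mu_apply] at this
    have h4 : u * s k * u⁻¹ = t := rfl
    rw [h4] at this
    have := congrArg Prod.snd this
    simp only at this
    rw [mul_one] at this
    exact this
  have hsplit : mu cs t = mu cs u * (mu cs (s k) * mu cs u⁻¹) := by
    rw [← map_mul, ← map_mul, hT, mul_assoc]
  have hstep : mu cs t (t, ε) = mu cs u (mu cs (s k) (mu cs u⁻¹ (t, ε))) := by
    rw [hsplit, Equiv.Perm.mul_apply, Equiv.Perm.mul_apply]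
  rw [hstep, h1, h2, h3]
  congr 1
  calc sgn cs u (s k) * -(sgn cs u⁻¹ t * ε)
      = -(sgn cs u⁻¹ t * sgn cs u (s k) * ε) := by
        rw [mul_neg, neg_inj, mul_left_comm, mul_assoc]
    _ = -ε := by rw [hcancel, one_mul]

theorem sgn_mul_refl {t : W} (ht : cs.IsReflection t) (w : W) :
    sgn cs (w * t) t = -sgn cs w t := by
  have : mu cs (w * t) (t, 1) = mu cs w (mu cs t (t, 1)) := by
    rw [← Equiv.Perm.mul_apply, ← map_mul]
  rw [sgn, this, mu_refl_self cs ht, mu_apply, mul_neg_one]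

theorem descent_of_sgn_neg {t w : W} (ht : cs.IsReflection t) (h : sgn cs w t = -1) :
    ℓ (w * t) < ℓ w := by
  obtain ⟨ω, hred, hw⟩ := cs.exists_reduced_word' w
  subst hw
  exact (cs.isRightInversion_of_mem_rightInvSeq hred (mem_ris_of_sgn_neg cs h)).2

theorem sgn_neg_of_descent {t w : W} (ht : cs.IsReflection t) (h : ℓ (w * t) < ℓ w) :
    sgn cs w t = -1 := by
  rcases Int.units_eq_one_or (sgn cs w t) with h1 | h1
  · exfalso
    have h2 : sgn cs (w * t) t = -1 := by rw [sgn_mul_refl cs ht, h1]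
    have h3 := descent_of_sgn_neg cs ht h2
    rw [mul_assoc, ht.mul_self, mul_one] at h3
    omega
  · exact h1

theorem length_smul_eq {w : W} {i : B} (h : ℓ w < ℓ (s i * w)) : ℓ (s i * w) = ℓ w + 1 :=
  (cs.length_simple_mul w i).resolve_right (by omega)

theorem length_smul_eq' {w : W} {i : B} (h : ℓ (s i * w) < ℓ w) : ℓ (s i * w) + 1 = ℓ w :=
  (cs.length_simple_mul w i).resolve_left (by omega)

theorem length_muls_eq {w : W} {i : B} (h : ℓ w < ℓ (w * s i)) : ℓ (w * s i) = ℓ w + 1 :=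
  (cs.length_mul_simple w i).resolve_right (by omega)

theorem length_muls_eq' {w : W} {i : B} (h : ℓ (w * s i) < ℓ w) : ℓ (w * s i) + 1 = ℓ w :=
  (cs.length_mul_simple w i).resolve_left (by omega)

/-- The key exchange-type lemma: if `ℓ(sw) > ℓ(w)`, `ℓ(wt) > ℓ(w)` and `ℓ(swt) < ℓ(sw)`,
then `sw = wt`. -/
theorem key_lemma {i k : B} {w : W} (h1 : ℓ w < ℓ (s i * w)) (h2 : ℓ w < ℓ (w * s k))
    (h3 : ℓ (s i * w * s k) < ℓ (s i * w)) : s i * w = w * s k := by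
  have hrefl : cs.IsReflection (s k) := cs.isReflection_simple k
  have hsgn : sgn cs (s i * w) (s k) = -1 := sgn_neg_of_descent cs hrefl h3
  obtain ⟨ω, hred, hw⟩ := cs.exists_reduced_word' w
  have hπ : π (i :: ω) = s i * w := by rw [cs.wordProd_cons, ← hw]
  have hmem : s k ∈ cs.rightInvSeq (i :: ω) := by
    apply mem_ris_of_sgn_neg cs
    rw [hπ]
    exact hsgn
  have hris : cs.rightInvSeq (i :: ω) = ((π ω)⁻¹ * s i * π ω) :: cs.rightInvSeq ω := rfl
  rw [hris, List.mem_cons] at hmem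
  rcases hmem with hcase | hcase
  · rw [hcase, ← hw]
    group
  · exfalso
    have := (cs.isRightInversion_of_mem_rightInvSeq hred hcase).2
    rw [← hw] at this
    omega
variable (q : ℂ)

/-- Value of the left multiplication operator `T_{s_i}` on a basis vector `T_w`. -/
noncomputable def Lfun (i : B) (w : W) : W →₀ ℂ :=
  if ℓ w < ℓ (s i * w) then Finsupp.single (s i * w) 1
  else (q - 1) • Finsupp.single w 1 + q • Finsupp.single (s i * w) 1

/-- Value of the right multiplication operator `T_{s_k}` on a basis vector `T_w`. -/
noncomputable def Rfun (k : B) (w : W) : W →₀ ℂ :=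
  if ℓ w < ℓ (w * s k) then Finsupp.single (w * s k) 1
  else (q - 1) • Finsupp.single w 1 + q • Finsupp.single (w * s k) 1

theorem Lfun_gt {i : B} {w : W} (h : ℓ w < ℓ (s i * w)) :
    Lfun cs q i w = Finsupp.single (s i * w) 1 := by rw [Lfun, if_pos h]

theorem Lfun_lt {i : B} {w : W} (h : ℓ (s i * w) < ℓ w) :
    Lfun cs q i w = (q - 1) • Finsupp.single w 1 + q • Finsupp.single (s i * w) 1 := by
  rw [Lfun, if_neg (by omega)]

theorem Rfun_gt {k : B} {w : W} (h : ℓ w < ℓ (w * s k)) :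
    Rfun cs q k w = Finsupp.single (w * s k) 1 := by rw [Rfun, if_pos h]

theorem Rfun_lt {k : B} {w : W} (h : ℓ (w * s k) < ℓ w) :
    Rfun cs q k w = (q - 1) • Finsupp.single w 1 + q • Finsupp.single (w * s k) 1 := by
  rw [Rfun, if_neg (by omega)]

noncomputable def Lop (i : B) : (W →₀ ℂ) →ₗ[ℂ] (W →₀ ℂ) :=
  Finsupp.lift _ ℂ W (Lfun cs q i)

noncomputable def Rop (k : B) : (W →₀ ℂ) →ₗ[ℂ] (W →₀ ℂ) :=
  Finsupp.lift _ ℂ W (Rfun cs q k)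

theorem Lop_single (i : B) (w : W) (c : ℂ) :
    Lop cs q i (Finsupp.single w c) = c • Lfun cs q i w := by
  rw [Lop, Finsupp.lift_apply, Finsupp.sum_single_index (by rw [zero_smul])]

theorem Rop_single (k : B) (w : W) (c : ℂ) :
    Rop cs q k (Finsupp.single w c) = c • Rfun cs q k w := by
  rw [Rop, Finsupp.lift_apply, Finsupp.sum_single_index (by rw [zero_smul])]

theorem length_smul_le (w : W) (i : B) : ℓ (s i * w) ≤ ℓ w + 1 := by
  rcases cs.length_simple_mul w i with h | h <;> omega

theorem length_muls_le (w : W) (i : B) : ℓ (w * s i) ≤ ℓ w + 1 := by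
  rcases cs.length_mul_simple w i with h | h <;> omega

/-- The key commutation: left and right multiplication operators commute
on basis elements. -/
theorem comm_single (i k : B) (w : W) :
    Lop cs q i (Rfun cs q k w) = Rop cs q k (Lfun cs q i w) := by
  have hiBC : s i * (w * s k) = s i * w * s k := by rw [mul_assoc]
  rcases (lt_or_gt_of_ne (cs.length_simple_mul_ne w i)) with hA | hA <;>
    rcases (lt_or_gt_of_ne (cs.length_mul_simple_ne w k)) with hB | hB <;>
    rcases (lt_or_gt_of_ne (cs.length_mul_simple_ne (s i * w) k)) with hC | hC
  · -- Case 4a : ℓ(sw) < ℓ(w), ℓ(wt) < ℓ(w), ℓ(swt) < ℓ(sw)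
    have e1 := length_smul_eq' cs hA
    have e2 := length_muls_eq' cs hB
    have e3 := length_muls_eq' cs hC
    have h4 : ℓ (s i * (w * s k)) < ℓ (w * s k) := by rw [hiBC]; omega
    simp only [Rfun_lt cs q hB, Lfun_lt cs q hA, map_add, map_smul, Lop_single, Rop_single,
      one_smul, Lfun_lt cs q h4, Rfun_lt cs q hC, hiBC]
    module
  · -- Case 4b : ℓ(sw) < ℓ(w), ℓ(wt) < ℓ(w), ℓ(swt) > ℓ(sw)
    have e1 := length_smul_eq' cs hA
    have e2 := length_muls_eq' cs hB
    have e3 := length_muls_eq cs hC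
    have hkey : s i * (s i * w) = s i * w * s k := by
      apply key_lemma cs
      · rw [cs.simple_mul_simple_cancel_left]; omega
      · exact hC
      · rw [cs.simple_mul_simple_cancel_left]; omega
    have hw : w = s i * w * s k := by
      rw [← hkey, cs.simple_mul_simple_cancel_left]
    have hAB : s i * w = w * s k := by
      calc s i * w = s i * w * s k * s k := by rw [cs.simple_mul_simple_cancel_right]
        _ = w * s k := by rw [← hw]
    have h4 : ℓ (w * s k) < ℓ (s i * (w * s k)) := by rw [hiBC]; omega
    simp only [Rfun_lt cs q hB, Lfun_lt cs q hA, map_add, map_smul, Lop_single, Rop_single,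
      one_smul, Lfun_gt cs q h4, Rfun_gt cs q hC, hiBC]
    rw [hAB]
  · -- Case 3a : impossible
    have e1 := length_smul_eq' cs hA
    have e2 := length_muls_eq cs hB
    have e3 := length_muls_eq' cs hC
    have u3 := length_smul_le cs (s i * (w * s k)) i
    rw [cs.simple_mul_simple_cancel_left, hiBC] at u3
    exfalso; omega
  · -- Case 3b : ℓ(sw) < ℓ(w) < ℓ(wt), ℓ(swt) = ℓ(w)
    have e1 := length_smul_eq' cs hA
    have e2 := length_muls_eq cs hB
    have e3 := length_muls_eq cs hC
    have h4 : ℓ (s i * (w * s k)) < ℓ (w * s k) := by rw [hiBC]; omega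
    simp only [Rfun_gt cs q hB, Lfun_lt cs q hA, map_add, map_smul, Lop_single, Rop_single,
      one_smul, Lfun_lt cs q h4, Rfun_gt cs q hC, hiBC]
  · -- Case 2a : ℓ(w) < ℓ(sw), ℓ(wt) < ℓ(w), ℓ(swt) = ℓ(w)
    have e1 := length_smul_eq cs hA
    have e2 := length_muls_eq' cs hB
    have e3 := length_muls_eq' cs hC
    have h4 : ℓ (w * s k) < ℓ (s i * (w * s k)) := by rw [hiBC]; omega
    simp only [Rfun_lt cs q hB, Lfun_gt cs q hA, map_add, map_smul, Lop_single, Rop_single,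
      one_smul, Lfun_gt cs q h4, Rfun_lt cs q hC, hiBC]
  · -- Case 2b : impossible
    have e1 := length_smul_eq cs hA
    have e2 := length_muls_eq' cs hB
    have u2 := length_smul_le cs (w * s k) i
    rw [hiBC] at u2
    exfalso; omega
  · -- Case 1b : ℓ(w) < ℓ(sw), ℓ(w) < ℓ(wt), ℓ(swt) < ℓ(sw) : key lemma case
    have e1 := length_smul_eq cs hA
    have e2 := length_muls_eq cs hB
    have e3 := length_muls_eq' cs hC
    have hAB : s i * w = w * s k := key_lemma cs hA hB hC
    have h4 : ℓ (s i * (w * s k)) < ℓ (w * s k) := by rw [hiBC]; omega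
    simp only [Rfun_gt cs q hB, Lfun_gt cs q hA, Lop_single, Rop_single, one_smul,
      Lfun_lt cs q h4, Rfun_lt cs q hC, hiBC]
    rw [hAB]
  · -- Case 1a : all lengths go up
    have e1 := length_smul_eq cs hA
    have e2 := length_muls_eq cs hB
    have e3 := length_muls_eq cs hC
    have h4 : ℓ (w * s k) < ℓ (s i * (w * s k)) := by rw [hiBC]; omega
    simp only [Rfun_gt cs q hB, Lfun_gt cs q hA, Lop_single, Rop_single, one_smul,
      Lfun_gt cs q h4, Rfun_gt cs q hC, hiBC]

theorem LR_comm (i k : B) :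
    (Lop cs q i) ∘ₗ (Rop cs q k) = (Rop cs q k) ∘ₗ (Lop cs q i) := by
  apply Finsupp.lhom_ext
  intro w c
  simp only [LinearMap.comp_apply, Lop_single, Rop_single, map_smul]
  rw [comm_single]
/-- Linear endomorphisms vanishing at `T_1` that commute with all right multiplication
operators are zero. -/
theorem eq_zero_of_comm (f : (W →₀ ℂ) →ₗ[ℂ] (W →₀ ℂ))
    (hf : ∀ k : B, f ∘ₗ Rop cs q k = Rop cs q k ∘ₗ f)
    (h0 : f (Finsupp.single 1 1) = 0) : f = 0 := by
  have key : ∀ n : ℕ, ∀ w : W, ℓ w ≤ n → f (Finsupp.single w 1) = 0 := by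
    intro n
    induction n with
    | zero =>
        intro w hw
        have h1 : w = 1 := cs.length_eq_zero_iff.mp (Nat.le_zero.mp hw)
        rwa [h1]
    | succ n ih =>
        intro w hw
        by_cases h1 : w = 1
        · rwa [h1]
        · obtain ⟨k, hk⟩ := cs.exists_rightDescent_of_ne_one h1
          rw [CoxeterSystem.IsRightDescent] at hk
          have hv : ℓ (w * s k) ≤ n := by omega
          have hlen : ℓ (w * s k) < ℓ (w * s k * s k) := by
            rw [cs.simple_mul_simple_cancel_right]; exact hk
          have hsingle : Finsupp.single w (1 : ℂ) = Rop cs q k (Finsupp.single (w * s k) 1) := by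
            rw [Rop_single, one_smul, Rfun_gt cs q hlen, cs.simple_mul_simple_cancel_right]
          rw [hsingle, ← LinearMap.comp_apply, hf k, LinearMap.comp_apply, ih _ hv, map_zero]
  apply Finsupp.lhom_ext
  intro w c
  have : Finsupp.single w c = c • Finsupp.single w (1 : ℂ) := by
    rw [Finsupp.smul_single, smul_eq_mul, mul_one]
  rw [this, map_smul, key (ℓ w) w le_rfl, smul_zero, LinearMap.zero_apply]

theorem exists_commuting (w : W) :
    ∃ F : (W →₀ ℂ) →ₗ[ℂ] (W →₀ ℂ), (∀ k : B, F ∘ₗ Rop cs q k = Rop cs q k ∘ₗ F) ∧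
      F (Finsupp.single 1 1) = Finsupp.single w 1 := by
  have key : ∀ n : ℕ, ∀ w : W, ℓ w ≤ n →
      ∃ F : (W →₀ ℂ) →ₗ[ℂ] (W →₀ ℂ), (∀ k : B, F ∘ₗ Rop cs q k = Rop cs q k ∘ₗ F) ∧
        F (Finsupp.single 1 1) = Finsupp.single w 1 := by
    intro n
    induction n with
    | zero =>
        intro w hw
        have h1 : w = 1 := cs.length_eq_zero_iff.mp (Nat.le_zero.mp hw)
        exact ⟨LinearMap.id, fun k => rfl, by rw [h1, LinearMap.id_apply]⟩
    | succ n ih =>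
        intro w hw
        by_cases h1 : w = 1
        · exact ⟨LinearMap.id, fun k => rfl, by rw [h1, LinearMap.id_apply]⟩
        · obtain ⟨i, hi⟩ := cs.exists_leftDescent_of_ne_one h1
          rw [CoxeterSystem.IsLeftDescent] at hi
          obtain ⟨F, hFcomm, hFval⟩ := ih (s i * w) (by omega)
          refine ⟨Lop cs q i ∘ₗ F, fun k => ?_, ?_⟩
          · rw [LinearMap.comp_assoc, hFcomm k, ← LinearMap.comp_assoc, LR_comm,
              LinearMap.comp_assoc]
          · have hlen : ℓ (s i * w) < ℓ (s i * (s i * w)) := by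
              rw [cs.simple_mul_simple_cancel_left]; exact hi
            rw [LinearMap.comp_apply, hFval, Lop_single, one_smul, Lfun_gt cs q hlen,
              cs.simple_mul_simple_cancel_left]
  exact key (ℓ w) w le_rfl

/-- The left multiplication operator associated to an arbitrary element of the Hecke algebra. -/
noncomputable def Top : (W →₀ ℂ) →ₗ[ℂ] ((W →₀ ℂ) →ₗ[ℂ] (W →₀ ℂ)) :=
  Finsupp.lift _ ℂ W (fun w => Classical.choose (exists_commuting cs q w))

theorem Top_single (w : W) (c : ℂ) :
    Top cs q (Finsupp.single w c) = c • Classical.choose (exists_commuting cs q w) := by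
  rw [Top, Finsupp.lift_apply, Finsupp.sum_single_index (by rw [zero_smul])]

theorem Top_comm (a : W →₀ ℂ) (k : B) :
    Top cs q a ∘ₗ Rop cs q k = Rop cs q k ∘ₗ Top cs q a := by
  induction a using Finsupp.induction_linear with
  | zero => simp
  | add f g hf hg =>
      rw [map_add, LinearMap.add_comp, LinearMap.comp_add, hf, hg]
  | single w c =>
      rw [Top_single, LinearMap.smul_comp, LinearMap.comp_smul,
        (Classical.choose_spec (exists_commuting cs q w)).1 k]

theorem Top_eval (a : W →₀ ℂ) : Top cs q a (Finsupp.single 1 1) = a := by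
  induction a using Finsupp.induction_linear with
  | zero => simp
  | add f g hf hg => rw [map_add, LinearMap.add_apply, hf, hg]
  | single w c =>
      rw [Top_single, LinearMap.smul_apply,
        (Classical.choose_spec (exists_commuting cs q w)).2, Finsupp.smul_single, smul_eq_mul,
        mul_one]

theorem comm_unique {f g : (W →₀ ℂ) →ₗ[ℂ] (W →₀ ℂ)}
    (hf : ∀ k : B, f ∘ₗ Rop cs q k = Rop cs q k ∘ₗ f)
    (hg : ∀ k : B, g ∘ₗ Rop cs q k = Rop cs q k ∘ₗ g)
    (h : f (Finsupp.single 1 1) = g (Finsupp.single 1 1)) : f = g := by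
  have hz : f - g = 0 := by
    apply eq_zero_of_comm cs q
    · intro k
      rw [LinearMap.sub_comp, LinearMap.comp_sub, hf k, hg k]
    · rw [LinearMap.sub_apply, h, sub_self]
  rw [← sub_eq_zero]
  exact hz

theorem Top_mul (a b : W →₀ ℂ) : Top cs q (Top cs q a b) = Top cs q a ∘ₗ Top cs q b := by
  apply comm_unique cs q (fun k => Top_comm cs q _ k)
  · intro k
    rw [LinearMap.comp_assoc, Top_comm cs q b k, ← LinearMap.comp_assoc, Top_comm cs q a k,
      LinearMap.comp_assoc]
  · rw [Top_eval, LinearMap.comp_apply, Top_eval]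

theorem Top_one : Top cs q (Finsupp.single 1 1) = LinearMap.id := by
  apply comm_unique cs q (fun k => Top_comm cs q _ k) (fun k => rfl)
  rw [Top_eval, LinearMap.id_apply]

theorem Top_simple (i : B) : Top cs q (Finsupp.single (s i) 1) = Lop cs q i := by
  apply comm_unique cs q (fun k => Top_comm cs q _ k) (fun k => LR_comm cs q i k)
  have hlen : ℓ (1 : W) < ℓ (s i * 1) := by
    rw [mul_one, cs.length_one, cs.length_simple]; omega
  rw [Top_eval, Lop_single, one_smul, Lfun_gt cs q hlen, mul_one]
end HeckeAux

/-- For a Coxeter system `(W, S)` and parameter `q`, the Hecke algebra structure on the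
free module with basis `{T_w : w ∈ W}` is well defined: there is a bilinear, associative,
unital multiplication satisfying `T_s T_w = T_{sw}` if `ℓ(sw) > ℓ(w)` and
`T_s T_w = (q-1) T_w + q T_{sw}` if `ℓ(sw) < ℓ(w)`, for `s ∈ S`, `w ∈ W`. -/
theorem hecke_algebra_of_coxeter_system {B : Type} (M : CoxeterMatrix B)
    {W : Type} [Group W] (cs : CoxeterSystem M W) (q : ℂ) :
    ∃ mul : (W →₀ ℂ) →ₗ[ℂ] (W →₀ ℂ) →ₗ[ℂ] (W →₀ ℂ),
      (∀ a b c : W →₀ ℂ, mul (mul a b) c = mul a (mul b c)) ∧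
      (∀ a : W →₀ ℂ, mul (Finsupp.single 1 1) a = a ∧ mul a (Finsupp.single 1 1) = a) ∧
      (∀ (i : B) (w : W),
        (cs.length (cs.simple i * w) > cs.length w →
          mul (Finsupp.single (cs.simple i) 1) (Finsupp.single w 1)
            = Finsupp.single (cs.simple i * w) 1) ∧
        (cs.length (cs.simple i * w) < cs.length w →
          mul (Finsupp.single (cs.simple i) 1) (Finsupp.single w 1)
            = (q - 1) • Finsupp.single w 1 + q • Finsupp.single (cs.simple i * w) 1)) := by
  refine ⟨HeckeAux.Top cs q, ?_, ?_, ?_⟩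
  · intro a b c
    rw [HeckeAux.Top_mul cs q a b]
    rfl
  · intro a
    constructor
    · rw [HeckeAux.Top_one]
      rfl
    · exact HeckeAux.Top_eval cs q a
  · intro i w
    constructor
    · intro h
      rw [HeckeAux.Top_simple, HeckeAux.Lop_single, one_smul, HeckeAux.Lfun_gt cs q h]
    · intro h
      rw [HeckeAux.Top_simple, HeckeAux.Lop_single, one_smul, HeckeAux.Lfun_lt cs q h]
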